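/- arXiv:0805.3758 — 2 statements merged into one kernel-verified Lean document; each statement's English description precedes it below -/
import Mathlib

section
/- Every non-Abelian three-dimensional nilpotent complex Jordan algebra is isomorphic to exactly one of: φ₁ with φ₁(e₁,e₁)=e₂, φ₁(e₁,e₂)=e₃; φ₂ with φ₂(e₁,e₁)=e₂, φ₂(e₃,e₃)=e₂; or φ₃ with φ₃(e₁,e₁)=e₂ (all other basis products zero). -/
/-- Bilinearity of a plain product. -/
def IsBilin (K : Type*) [Field K] {V : Type*} [AddCommGroup V] [Module K V]
    (φ : V → V → V) : Prop :=
  (∀ (a : K) (x y z : V), φ (a • x + y) z = a • φ x z + φ y z) ∧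
  (∀ (a : K) (x y z : V), φ x (a • y + z) = a • φ x y + φ x z)

/-- Commutativity (symmetry) of the product. -/
def IsComm {V : Type*} (φ : V → V → V) : Prop := ∀ x y, φ x y = φ y x

/-- The Jordan identity. -/
def JordanId {V : Type*} (φ : V → V → V) : Prop :=
  ∀ x y, φ (φ x x) (φ x y) = φ x (φ (φ x x) y)

/-- Lower central series: `lcs K φ 0 = C¹ = V`, and `lcs K φ m` is the term `C^{m+1}`. -/
def lcs (K : Type*) [Field K] {V : Type*} [AddCommGroup V] [Module K V]
    (φ : V → V → V) : ℕ → Submodule K V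
  | 0 => ⊤
  | m + 1 => Submodule.span K {z | ∃ x ∈ lcs K φ m, ∃ y, z = φ x y}

/-- Nilpotency: some term of the lower central series vanishes. -/
def IsNilp (K : Type*) [Field K] {V : Type*} [AddCommGroup V] [Module K V]
    (φ : V → V → V) : Prop := ∃ k, lcs K φ k = ⊥

/-- Isomorphism of products. -/
def IsIso (K : Type*) [Field K] {V W : Type*} [AddCommGroup V] [Module K V]
    [AddCommGroup W] [Module K W] (φ : V → V → V) (ψ : W → W → W) : Prop :=
  ∃ f : V ≃ₗ[K] W, ∀ x y, f (φ x y) = ψ (f x) (f y)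

/-- φ₁(e₁,e₁)=e₂, φ₁(e₁,e₂)=e₃. -/
def ψ₁ (x y : Fin 3 → ℂ) : Fin 3 → ℂ := ![0, x 0 * y 0, x 0 * y 1 + x 1 * y 0]
/-- φ₂(e₁,e₁)=e₂, φ₂(e₃,e₃)=e₂. -/
def ψ₂ (x y : Fin 3 → ℂ) : Fin 3 → ℂ := ![0, x 0 * y 0 + x 2 * y 2, 0]
/-- φ₃(e₁,e₁)=e₂. -/
def ψ₃ (x y : Fin 3 → ℂ) : Fin 3 → ℂ := ![0, x 0 * y 0, 0]

def model : Fin 3 → ((Fin 3 → ℂ) → (Fin 3 → ℂ) → (Fin 3 → ℂ)) := ![ψ₁, ψ₂, ψ₃]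

/-!
Nilpotency in dimension three forces `C⁴ = 0`, and `V² = C²` has dimension 1 or 2.

If `V²` has dimension 2, then `V = ℂx ⊕ V²` for some `x`, so `V² = ℂx² + C³`. Were `x·x² = 0`,
the Jordan identity would give `x²·x² = x·(x²·x) = 0`; then `x²` annihilates `V`, so `C³ = 0` and
`V² = ℂx²`, which is absurd. Hence `x, x², x·x²` is a basis, and it realises `φ₁`.

If `V²` has dimension 1, then `C³ = 0` and, by polarisation, `V² = ℂt²` for some `t`; `t²`
annihilates `V` and `a·b = B(a, b) t²` for a symmetric form `B`. A vector `u` outside `span{t, t²}`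
with `B(t, u) = 0`, rescaled by a complex square root, gives `φ₂` or `φ₃` according as `u² ≠ 0` or
`u² = 0`.

The models are told apart by whether some product `(ab)c` is nonzero (only `φ₁`) and whether some
`a` with `a² = 0` acts nontrivially (all but `φ₃`).
-/

open Module

section General

variable {K V : Type*} [Field K] [AddCommGroup V] [Module K V]

section LowerCentralSeries

variable (φ : V → V → V)

@[simp]
theorem lcs_zero : lcs K φ 0 = ⊤ := rfl

theorem lcs_succ_le : ∀ m, lcs K φ (m + 1) ≤ lcs K φ m
  | 0 => le_top
  | m + 1 => by
    refine Submodule.span_mono ?_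
    rintro _ ⟨x, hx, y, rfl⟩
    exact ⟨x, lcs_succ_le m hx, y, rfl⟩

theorem lcs_antitone : Antitone (lcs K φ) := antitone_nat_of_succ_le (lcs_succ_le φ)

theorem apply_mem_lcs_succ {m : ℕ} {x : V} (hx : x ∈ lcs K φ m) (y : V) :
    φ x y ∈ lcs K φ (m + 1) :=
  Submodule.subset_span ⟨x, hx, y, rfl⟩

theorem lcs_succ_le_iff {m : ℕ} {p : Submodule K V} :
    lcs K φ (m + 1) ≤ p ↔ ∀ x ∈ lcs K φ m, ∀ y, φ x y ∈ p := by
  refine Submodule.span_le.trans ⟨fun h x hx y => h ⟨x, hx, y, rfl⟩, ?_⟩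
  rintro h _ ⟨x, hx, y, rfl⟩
  exact h x hx y

theorem lcs_one_eq_bot_iff : lcs K φ 1 = ⊥ ↔ ∀ x y, φ x y = 0 := by
  rw [eq_bot_iff, lcs_succ_le_iff φ (m := 0)]
  simp

theorem lcs_succ_congr {m n : ℕ} (h : lcs K φ m = lcs K φ n) :
    lcs K φ (m + 1) = lcs K φ (n + 1) := by
  rw [lcs, lcs, h]

theorem lcs_add_eq_of_succ_eq {m : ℕ} (h : lcs K φ (m + 1) = lcs K φ m) :
    ∀ k, lcs K φ (m + k) = lcs K φ m
  | 0 => rfl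
  | k + 1 => (lcs_succ_congr φ (lcs_add_eq_of_succ_eq h k)).trans h

namespace IsNilp

variable {φ}

theorem lcs_eq_bot_of_succ_eq (hφ : IsNilp K φ) {m : ℕ} (h : lcs K φ (m + 1) = lcs K φ m) :
    lcs K φ m = ⊥ := by
  obtain ⟨k, hk⟩ := hφ
  rw [← lcs_add_eq_of_succ_eq φ h k, eq_bot_iff, ← hk]
  exact lcs_antitone φ (Nat.le_add_left k m)

theorem lcs_succ_lt (hφ : IsNilp K φ) {m : ℕ} (hm : lcs K φ m ≠ ⊥) :
    lcs K φ (m + 1) < lcs K φ m :=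
  (lcs_succ_le φ m).lt_of_ne fun h => hm (hφ.lcs_eq_bot_of_succ_eq h)

theorem finrank_lcs_le [FiniteDimensional K V] (hφ : IsNilp K φ) :
    ∀ m, finrank K (lcs K φ m) ≤ finrank K V - m
  | 0 => by rw [lcs_zero, finrank_top]; exact Nat.le_refl _
  | m + 1 => by
    by_cases hm : lcs K φ m = ⊥
    · have : lcs K φ (m + 1) = ⊥ := eq_bot_iff.2 (hm ▸ lcs_succ_le φ m)
      rw [this, finrank_bot]
      exact Nat.zero_le _
    · have := Submodule.finrank_lt_finrank_of_lt (hφ.lcs_succ_lt hm)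
      have := hφ.finrank_lcs_le m
      omega

theorem lcs_finrank_eq_bot [FiniteDimensional K V] (hφ : IsNilp K φ) :
    lcs K φ (finrank K V) = ⊥ :=
  Submodule.finrank_eq_zero.1 (by simpa using hφ.finrank_lcs_le (finrank K V))

theorem finrank_lcs_one_lt [FiniteDimensional K V] [Nontrivial V] (hφ : IsNilp K φ) :
    finrank K (lcs K φ 1) < finrank K V := by
  have := Submodule.finrank_lt_finrank_of_lt (hφ.lcs_succ_lt (m := 0) (by simp))
  rwa [lcs_zero, finrank_top] at this

end IsNilp

end LowerCentralSeries

theorem IsBilin.exists_eq_linearMap {φ : V → V → V} (h : IsBilin K φ) :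
    ∃ Φ : V →ₗ[K] V →ₗ[K] V, φ = (Φ · ·) := by
  obtain ⟨hl, hr⟩ := h
  have hl0 (z : V) : φ 0 z = 0 := by simpa using hl 1 0 0 z
  have hr0 (z : V) : φ z 0 = 0 := by simpa using hr 1 z 0 0
  exact ⟨LinearMap.mk₂ K φ (fun x y z => by simpa using hl 1 x y z)
    (fun a x z => by simpa [hl0] using hl a x 0 z) (fun x y z => by simpa using hr 1 x y z)
    (fun a x z => by simpa [hr0] using hr a x z 0), rfl⟩

section Bilinear

variable {Φ : V →ₗ[K] V →ₗ[K] V}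

theorem lcs_succ_eq_bot_iff {m : ℕ} :
    lcs K (Φ · ·) (m + 1) = ⊥ ↔ lcs K (Φ · ·) m ≤ LinearMap.ker Φ := by
  rw [eq_bot_iff, lcs_succ_le_iff]
  simp [SetLike.le_def, LinearMap.ext_iff]

theorem exists_apply_self_ne_zero [NeZero (2 : K)] (hcomm : ∀ x y, Φ x y = Φ y x)
    (hΦ : ∃ x y, Φ x y ≠ 0) : ∃ t, Φ t t ≠ 0 := by
  by_contra! h
  obtain ⟨x, y, hxy⟩ := hΦ
  have : (2 : K) • Φ x y = 0 := by
    have := h (x + y)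
    simp only [map_add, LinearMap.add_apply, h x, h y, hcomm y x] at this
    rw [two_smul]; simpa using this
  exact hxy ((smul_eq_zero.1 this).resolve_left two_ne_zero)

theorem lcs_one_le_span_sup_lcs_two (hcomm : ∀ x y, Φ x y = Φ y x) {x : V}
    (hx : K ∙ x ⊔ lcs K (Φ · ·) 1 = ⊤) :
    lcs K (Φ · ·) 1 ≤ K ∙ Φ x x ⊔ lcs K (Φ · ·) 2 := by
  have hdecomp (a : V) : ∃ c : K, ∃ d ∈ lcs K (Φ · ·) 1, a = c • x + d := by
    obtain ⟨_, hy, d, hd, rfl⟩ := Submodule.mem_sup.1 (hx ▸ Submodule.mem_top : a ∈ _)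
    obtain ⟨c, rfl⟩ := Submodule.mem_span_singleton.1 hy
    exact ⟨c, d, hd, rfl⟩
  refine (lcs_succ_le_iff _).2 fun a _ b => ?_
  obtain ⟨c, d, hd, rfl⟩ := hdecomp a
  obtain ⟨c', d', hd', rfl⟩ := hdecomp b
  have hxx : Φ x x ∈ K ∙ Φ x x ⊔ lcs K (Φ · ·) 2 :=
    Submodule.mem_sup_left (Submodule.mem_span_singleton_self _)
  have hd₂ (v : V) : Φ d v ∈ K ∙ Φ x x ⊔ lcs K (Φ · ·) 2 :=
    Submodule.mem_sup_right (apply_mem_lcs_succ _ hd v)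
  have hd₂' : Φ x d' ∈ K ∙ Φ x x ⊔ lcs K (Φ · ·) 2 :=
    Submodule.mem_sup_right (hcomm x d' ▸ apply_mem_lcs_succ _ hd' x)
  simp only [map_add, map_smul, LinearMap.add_apply, LinearMap.smul_apply]
  exact add_mem (Submodule.smul_mem _ _ (add_mem (Submodule.smul_mem _ _ hxx) (hd₂ x)))
    (add_mem (Submodule.smul_mem _ _ hd₂') (hd₂ d'))

theorem lcs_two_eq_bot_of_cube_eq_zero (hcomm : ∀ x y, Φ x y = Φ y x)
    (hjord : ∀ x y, Φ (Φ x x) (Φ x y) = Φ x (Φ (Φ x x) y)) {x : V}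
    (hx : K ∙ x ⊔ lcs K (Φ · ·) 1 = ⊤) (h3 : lcs K (Φ · ·) 3 = ⊥) (hcube : Φ x (Φ x x) = 0) :
    lcs K (Φ · ·) 2 = ⊥ := by
  have h1 := lcs_one_le_span_sup_lcs_two hcomm hx
  have h2 : lcs K (Φ · ·) 2 ≤ LinearMap.ker Φ := lcs_succ_eq_bot_iff.1 h3
  have hsqx : Φ (Φ x x) x = 0 := by rw [hcomm, hcube]
  have hsqsq : Φ (Φ x x) (Φ x x) = 0 := by rw [hjord, hsqx, map_zero]
  have hsq : Φ x x ∈ LinearMap.ker Φ := by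
    have hker : ⊤ ≤ LinearMap.ker (Φ (Φ x x)) := by
      refine hx ▸ sup_le ((Submodule.span_singleton_le_iff_mem _ _).2 hsqx) (h1.trans ?_)
      refine sup_le ((Submodule.span_singleton_le_iff_mem _ _).2 hsqsq) fun d hd => ?_
      rw [LinearMap.mem_ker, hcomm, LinearMap.mem_ker.1 (h2 hd), LinearMap.zero_apply]
    exact LinearMap.ker_eq_top.1 (top_le_iff.1 hker)
  exact lcs_succ_eq_bot_iff.2
    (h1.trans (sup_le ((Submodule.span_singleton_le_iff_mem _ _).2 hsq) h2))

end Bilinear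

theorem linearIndependent_of_apply_apply_eq_zero (f : V →ₗ[K] V) {v : V} (hf2 : f (f v) = 0)
    (hf1 : f v ≠ 0) : LinearIndependent K ![v, f v] := by
  refine LinearIndependent.pair_iff.2 fun a b hab => ?_
  have ha : a = 0 := by simpa [hf2, hf1] using congr(f $hab)
  subst ha
  simpa [hf1] using hab

theorem linearIndependent_of_apply_apply_apply_eq_zero (f : V →ₗ[K] V) {v : V}
    (hf3 : f (f (f v)) = 0) (hf2 : f (f v) ≠ 0) : LinearIndependent K ![v, f v, f (f v)] := by
  rw [Fintype.linearIndependent_iff]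
  intro g hg
  simp only [Fin.sum_univ_three, Matrix.cons_val] at hg
  have hg0 : g 0 = 0 := by simpa [hf2, hf3] using congr(f (f $hg))
  have hg1 : g 1 = 0 := by simpa [hg0, hf2, hf3] using congr(f $hg)
  have hg2 : g 2 = 0 := by simpa [hg0, hg1, hf2] using hg
  intro i
  fin_cases i <;> assumption

theorem LinearIndependent.triple {x y z : V} (hxy : LinearIndependent K ![x, y])
    (hz : z ∉ Submodule.span K {x, y}) : LinearIndependent K ![x, y, z] := by
  have hinit : Fin.init ![x, y, z] = ![x, y] := by ext i; fin_cases i <;> rfl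
  rw [linearIndependent_finSucc', hinit, Matrix.range_cons_cons_empty]
  exact ⟨hxy, hz⟩

theorem isIso_of_linearIndependent {ι : Type*} [Fintype ι] [Nonempty ι] {φ : V → V → V}
    {v : ι → V} (hv : LinearIndependent K v) (hcard : Fintype.card ι = finrank K V)
    (ψ : (ι → K) → (ι → K) → (ι → K))
    (h : ∀ p q, φ (∑ i, p i • v i) (∑ i, q i • v i) = ∑ k, ψ p q k • v k) :
    IsIso K φ ψ := by
  let b := basisOfLinearIndependentOfCardEqFinrank hv hcard
  have hb : ⇑b = v := coe_basisOfLinearIndependentOfCardEqFinrank hv hcard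
  refine ⟨b.equivFun, fun x y => ?_⟩
  have := h (b.equivFun x) (b.equivFun y)
  simp only [← hb, ← Module.Basis.equivFun_symm_apply, LinearEquiv.symm_apply_apply] at this
  rw [this, LinearEquiv.apply_symm_apply]

theorem exists_span_singleton_sup_eq_top [FiniteDimensional K V] {p : Submodule K V}
    (hp : finrank K p + 1 = finrank K V) : ∃ x, K ∙ x ⊔ p = ⊤ := by
  obtain ⟨x, hx⟩ := SetLike.exists_not_mem_of_ne_top p fun h => by
    rw [h, finrank_top] at hp
    omega
  refine ⟨x, Submodule.eq_top_of_finrank_eq (le_antisymm (Submodule.finrank_le _) ?_)⟩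
  have : p < K ∙ x ⊔ p := lt_of_le_of_ne le_sup_right fun h =>
    hx (h ▸ Submodule.mem_sup_left (Submodule.mem_span_singleton_self x))
  have := Submodule.finrank_lt_finrank_of_lt this
  omega

theorem finrank_span_singleton_le_one (v : V) : finrank K (K ∙ v) ≤ 1 := by
  simpa using finrank_span_le_card ({v} : Set V)

theorem exists_notMem_span_pair [FiniteDimensional K V] (hV : 2 < finrank K V) (x y : V) :
    ∃ w, w ∉ Submodule.span K {x, y} := by
  refine SetLike.exists_not_mem_of_ne_top _ fun h => ?_
  have := finrank_range_le_card (R := K) ![x, y]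
  rw [Set.finrank, Matrix.range_cons_cons_empty, h, finrank_top, Fintype.card_fin] at this
  omega

section Invariants

variable {W : Type*} [AddCommGroup W] [Module K W] {φ : V → V → V} {ψ : W → W → W}

theorem IsIso.symm (h : IsIso K φ ψ) : IsIso K ψ φ := by
  obtain ⟨f, hf⟩ := h
  exact ⟨f.symm, fun x y => f.injective (by simp [hf])⟩

theorem IsIso.exists_mul_mul_ne_zero (h : IsIso K φ ψ) (hφ : ∃ a b c, φ (φ a b) c ≠ 0) :
    ∃ a b c, ψ (ψ a b) c ≠ 0 := by
  obtain ⟨f, hf⟩ := h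
  obtain ⟨a, b, c, habc⟩ := hφ
  exact ⟨f a, f b, f c, by rwa [← hf, ← hf, f.map_ne_zero_iff]⟩

theorem IsIso.exists_mul_self_eq_zero_mul_ne_zero (h : IsIso K φ ψ)
    (hφ : ∃ a b, φ a a = 0 ∧ φ a b ≠ 0) : ∃ a b, ψ a a = 0 ∧ ψ a b ≠ 0 := by
  obtain ⟨f, hf⟩ := h
  obtain ⟨a, b, haa, hab⟩ := hφ
  exact ⟨f a, f b, by rw [← hf, haa, map_zero], by rwa [← hf, f.map_ne_zero_iff]⟩

end Invariants

end General

section DimensionThree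

variable {V : Type*} [AddCommGroup V] [Module ℂ V] {Φ : V →ₗ[ℂ] V →ₗ[ℂ] V}

theorem isIso_ψ₁ (hV : finrank ℂ V = 3) {x y z : V} (hli : LinearIndependent ℂ ![x, y, z])
    (hxx : Φ x x = y) (hxy : Φ x y = z) (hyx : Φ y x = z) (hyy : Φ y y = 0) (hz : Φ z = 0)
    (hz' : ∀ v, Φ v z = 0) : IsIso ℂ (Φ · ·) ψ₁ :=
  isIso_of_linearIndependent hli (by simp [hV]) _ fun p q => by
    simp only [ψ₁, Fin.sum_univ_three, Matrix.cons_val, map_add, map_smul, LinearMap.add_apply,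
      LinearMap.smul_apply, LinearMap.zero_apply, hxx, hxy, hyx, hyy, hz, hz']
    module

theorem isIso_ψ₂ (hV : finrank ℂ V = 3) {x y z : V} (hli : LinearIndependent ℂ ![x, y, z])
    (hxx : Φ x x = y) (hzz : Φ z z = y) (hxz : Φ x z = 0) (hzx : Φ z x = 0) (hy : Φ y = 0)
    (hy' : ∀ v, Φ v y = 0) : IsIso ℂ (Φ · ·) ψ₂ :=
  isIso_of_linearIndependent hli (by simp [hV]) _ fun p q => by
    simp only [ψ₂, Fin.sum_univ_three, Matrix.cons_val, map_add, map_smul, LinearMap.add_apply,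
      LinearMap.smul_apply, LinearMap.zero_apply, hxx, hzz, hxz, hzx, hy, hy']
    module

theorem isIso_ψ₃ (hV : finrank ℂ V = 3) {x y z : V} (hli : LinearIndependent ℂ ![x, y, z])
    (hxx : Φ x x = y) (hxz : Φ x z = 0) (hzx : Φ z x = 0) (hzz : Φ z z = 0) (hy : Φ y = 0)
    (hy' : ∀ v, Φ v y = 0) : IsIso ℂ (Φ · ·) ψ₃ :=
  isIso_of_linearIndependent hli (by simp [hV]) _ fun p q => by
    simp only [ψ₃, Fin.sum_univ_three, Matrix.cons_val, map_add, map_smul, LinearMap.add_apply,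
      LinearMap.smul_apply, LinearMap.zero_apply, hxx, hzz, hxz, hzx, hy, hy']
    module

theorem isIso_ψ₁_of_cube_ne_zero (hV : finrank ℂ V = 3) (hcomm : ∀ x y, Φ x y = Φ y x)
    (hjord : ∀ x y, Φ (Φ x x) (Φ x y) = Φ x (Φ (Φ x x) y)) (h3 : lcs ℂ (Φ · ·) 3 = ⊥) {x : V}
    (hcube : Φ x (Φ x x) ≠ 0) : IsIso ℂ (Φ · ·) ψ₁ := by
  have hcube_mem : Φ x (Φ x x) ∈ lcs ℂ (Φ · ·) 2 := by
    rw [hcomm]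
    exact apply_mem_lcs_succ _ (apply_mem_lcs_succ _ Submodule.mem_top x) x
  have hz : Φ (Φ x (Φ x x)) = 0 := LinearMap.mem_ker.1 (lcs_succ_eq_bot_iff.1 h3 hcube_mem)
  have hz' (v : V) : Φ v (Φ x (Φ x x)) = 0 := by rw [hcomm, hz, LinearMap.zero_apply]
  have hyy : Φ (Φ x x) (Φ x x) = 0 := by rw [hjord, hcomm _ x, hz']
  exact isIso_ψ₁ hV (linearIndependent_of_apply_apply_apply_eq_zero (Φ x) (hz' x) hcube) rfl rfl
    (hcomm _ _) hyy hz hz'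

theorem isIso_ψ₁_of_finrank_lcs_one_eq_two (hV : finrank ℂ V = 3)
    (hcomm : ∀ x y, Φ x y = Φ y x) (hjord : ∀ x y, Φ (Φ x x) (Φ x y) = Φ x (Φ (Φ x x) y))
    (hnilp : IsNilp ℂ (Φ · ·)) (h1 : finrank ℂ (lcs ℂ (Φ · ·) 1) = 2) : IsIso ℂ (Φ · ·) ψ₁ := by
  have : FiniteDimensional ℂ V := .of_finrank_eq_succ hV
  have h3 : lcs ℂ (Φ · ·) 3 = ⊥ := hV ▸ hnilp.lcs_finrank_eq_bot
  obtain ⟨x, hx⟩ := exists_span_singleton_sup_eq_top (by rw [h1, hV])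
  refine isIso_ψ₁_of_cube_ne_zero hV hcomm hjord h3 (x := x) fun hcube => ?_
  have hle := Submodule.finrank_mono (lcs_one_le_span_sup_lcs_two hcomm hx)
  rw [lcs_two_eq_bot_of_cube_eq_zero hcomm hjord hx h3 hcube, sup_bot_eq, h1] at hle
  have := finrank_span_singleton_le_one (K := ℂ) (Φ x x)
  omega

theorem isIso_ψ₂_or_ψ₃_of_forall_mem_span (hV : finrank ℂ V = 3) (hcomm : ∀ x y, Φ x y = Φ y x)
    {t : V} (ht : Φ t t ≠ 0) (hann : Φ (Φ t t) = 0) (hspan : ∀ a b, Φ a b ∈ ℂ ∙ Φ t t) :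
    IsIso ℂ (Φ · ·) ψ₂ ∨ IsIso ℂ (Φ · ·) ψ₃ := by
  have : FiniteDimensional ℂ V := .of_finrank_eq_succ hV
  set e := Φ t t
  have hann' (v : V) : Φ v e = 0 := by rw [hcomm, hann, LinearMap.zero_apply]
  have hli {u : V} (hu : u ∉ Submodule.span ℂ {t, e}) : LinearIndependent ℂ ![t, e, u] :=
    (linearIndependent_of_apply_apply_eq_zero (Φ t) (hann' t) ht).triple hu
  obtain ⟨w, hw⟩ := exists_notMem_span_pair (K := ℂ) (by omega) t e
  obtain ⟨β, hβ⟩ := Submodule.mem_span_singleton.1 (hspan t w)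
  set u := w - β • t
  have hu : u ∉ Submodule.span ℂ {t, e} := by
    rwa [Submodule.sub_mem_iff_left _ (Submodule.smul_mem _ _ (Submodule.subset_span (by simp)))]
  have htu : Φ t u = 0 := by simp [u, ← hβ, e]
  obtain ⟨γ, hγ⟩ := Submodule.mem_span_singleton.1 (hspan u u)
  obtain ⟨s, rfl⟩ := IsAlgClosed.exists_eq_mul_self γ
  rcases eq_or_ne s 0 with rfl | hs
  · refine .inr (isIso_ψ₃ hV (hli hu) rfl htu (hcomm t u ▸ htu) ?_ hann hann')
    simpa using hγ.symm
  · refine .inl (isIso_ψ₂ (z := s⁻¹ • u) hV (hli ?_) rfl ?_ ?_ ?_ hann hann')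
    · rwa [Submodule.smul_mem_iff _ (inv_ne_zero hs)]
    · rw [map_smul, map_smul, LinearMap.smul_apply, ← hγ, smul_smul, smul_smul,
        ← mul_inv, inv_mul_cancel₀ (mul_self_ne_zero.2 hs), one_smul]
    · simp [htu]
    · simp [hcomm _ t, htu]

theorem isIso_ψ₂_or_ψ₃_of_finrank_lcs_one_eq_one (hV : finrank ℂ V = 3)
    (hcomm : ∀ x y, Φ x y = Φ y x) (hnilp : IsNilp ℂ (Φ · ·)) (h1 : finrank ℂ (lcs ℂ (Φ · ·) 1) = 1) :
    IsIso ℂ (Φ · ·) ψ₂ ∨ IsIso ℂ (Φ · ·) ψ₃ := by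
  have : FiniteDimensional ℂ V := .of_finrank_eq_succ hV
  have h1ne : lcs ℂ (Φ · ·) 1 ≠ ⊥ := fun h => by
    rw [h, finrank_bot] at h1
    exact zero_ne_one h1
  have h2 : lcs ℂ (Φ · ·) 2 = ⊥ := by
    have : finrank ℂ (lcs ℂ (Φ · ·) 2) < 1 :=
      h1 ▸ Submodule.finrank_lt_finrank_of_lt (hnilp.lcs_succ_lt h1ne)
    exact Submodule.finrank_eq_zero.1 (Nat.lt_one_iff.1 this)
  obtain ⟨t, ht⟩ := exists_apply_self_ne_zero hcomm (by simpa [lcs_one_eq_bot_iff] using h1ne)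
  have ht1 : Φ t t ∈ lcs ℂ (Φ · ·) 1 := apply_mem_lcs_succ _ Submodule.mem_top t
  have hspan : lcs ℂ (Φ · ·) 1 = ℂ ∙ Φ t t :=
    (Submodule.eq_of_le_of_finrank_eq ((Submodule.span_singleton_le_iff_mem _ _).2 ht1)
      (by rw [finrank_span_singleton ht, h1])).symm
  refine isIso_ψ₂_or_ψ₃_of_forall_mem_span hV hcomm ht
    (LinearMap.mem_ker.1 (lcs_succ_eq_bot_iff.1 h2 ht1)) fun a b => ?_
  rw [← hspan]
  exact apply_mem_lcs_succ _ Submodule.mem_top b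

end DimensionThree

theorem exists_model_mul_mul_ne_zero_iff (i : Fin 3) :
    (∃ a b c, model i (model i a b) c ≠ 0) ↔ i = 0 := by
  fin_cases i
  · exact iff_of_true ⟨![1, 0, 0], ![1, 0, 0], ![1, 0, 0], fun h => by
      simpa [model, ψ₁] using congrFun h 2⟩ rfl
  · refine iff_of_false (fun ⟨a, b, c, h⟩ => h ?_) (by decide)
    ext k; fin_cases k <;> simp [model, ψ₂]
  · refine iff_of_false (fun ⟨a, b, c, h⟩ => h ?_) (by decide)
    ext k; fin_cases k <;> simp [model, ψ₃]

theorem exists_model_mul_self_eq_zero_mul_ne_zero_iff (i : Fin 3) :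
    (∃ a b, model i a a = 0 ∧ model i a b ≠ 0) ↔ i ≠ 2 := by
  fin_cases i
  · refine iff_of_true ⟨![0, 1, 0], ![1, 0, 0], ?_, fun h => ?_⟩ (by decide)
    · ext k; fin_cases k <;> simp [model, ψ₁]
    · simpa [model, ψ₁] using congrFun h 2
  · refine iff_of_true ⟨![1, 0, Complex.I], ![1, 0, 0], ?_, fun h => ?_⟩ (by decide)
    · ext k; fin_cases k <;> simp [model, ψ₂]
    · simpa [model, ψ₂] using congrFun h 1
  · refine iff_of_false (fun ⟨a, b, haa, hab⟩ => hab ?_) (by decide)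
    have : a 0 = 0 := by simpa [model, ψ₃] using congrFun haa 1
    ext k; fin_cases k <;> simp [model, ψ₃, this]

theorem eq_of_isIso_model {V : Type*} [AddCommGroup V] [Module ℂ V] {φ : V → V → V}
    {i j : Fin 3} (hi : IsIso ℂ φ (model i)) (hj : IsIso ℂ φ (model j)) : i = j := by
  have hP : i = 0 ↔ j = 0 := by
    rw [← exists_model_mul_mul_ne_zero_iff, ← exists_model_mul_mul_ne_zero_iff]
    exact ⟨fun h => hj.exists_mul_mul_ne_zero (hi.symm.exists_mul_mul_ne_zero h),
      fun h => hi.exists_mul_mul_ne_zero (hj.symm.exists_mul_mul_ne_zero h)⟩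
  have hR : i ≠ 2 ↔ j ≠ 2 := by
    rw [← exists_model_mul_self_eq_zero_mul_ne_zero_iff,
      ← exists_model_mul_self_eq_zero_mul_ne_zero_iff]
    exact ⟨fun h => hj.exists_mul_self_eq_zero_mul_ne_zero
        (hi.symm.exists_mul_self_eq_zero_mul_ne_zero h),
      fun h => hi.exists_mul_self_eq_zero_mul_ne_zero
        (hj.symm.exists_mul_self_eq_zero_mul_ne_zero h)⟩
  exact (by decide : ∀ i j : Fin 3, (i = 0 ↔ j = 0) → (i ≠ 2 ↔ j ≠ 2) → i = j) i j hP hR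

/-- every non-Abelian three-dimensional nilpotent complex Jordan algebra
is isomorphic to exactly one of φ₁, φ₂, φ₃. -/
theorem dim_three_nilpotent_jordan_classification
    {V : Type*} [AddCommGroup V] [Module ℂ V] (φ : V → V → V)
    (hbil : IsBilin ℂ φ) (hcomm : IsComm φ) (hjord : JordanId φ)
    (hnilp : IsNilp ℂ φ) (hdim : Module.finrank ℂ V = 3)
    (hnonab : ∃ x y : V, φ x y ≠ 0) :
    ∃! i : Fin 3, IsIso ℂ φ (model i) := by
  obtain ⟨Φ, rfl⟩ := hbil.exists_eq_linearMap
  have : FiniteDimensional ℂ V := .of_finrank_eq_succ hdim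
  have : Nontrivial V := Module.nontrivial_of_finrank_eq_succ hdim
  have hlt := hnilp.finrank_lcs_one_lt
  have hne : lcs ℂ (Φ · ·) 1 ≠ ⊥ := by simpa [lcs_one_eq_bot_iff] using hnonab
  have hpos := Submodule.finrank_eq_zero.not.2 hne
  obtain ⟨i, hi⟩ : ∃ i, IsIso ℂ (Φ · ·) (model i) := by
    obtain h1 | h1 : finrank ℂ (lcs ℂ (Φ · ·) 1) = 1 ∨ finrank ℂ (lcs ℂ (Φ · ·) 1) = 2 := by
      omega
    · rcases isIso_ψ₂_or_ψ₃_of_finrank_lcs_one_eq_one hdim hcomm hnilp h1 with h | h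
      exacts [⟨1, h⟩, ⟨2, h⟩]
    · exact ⟨0, isIso_ψ₁_of_finrank_lcs_one_eq_two hdim hcomm hjord hnilp h1⟩
  exact ⟨i, hi, fun j hj => eq_of_isIso_model hj hi⟩
end

section
/- Let φ be a four-dimensional nilpotent complex Jordan algebra with basis {e₁,e₂,e₃,e₄} satisfying φ(e₁,e₁)=e₂, φ(e₁,e₂)=e₃, φ(e₁,e₃)=e₄, and with e₄ in the center. Then φ(e₂,e₂)=e₄, φ(e₂,e₃)=0, and φ(e₃,e₃)=0; hence φ is uniquely determined. -/
/-!
Write `a² = φ a a` and `aᵏ⁺¹ = φ a aᵏ`. The Jordan identity at `(x, y) = (a, a)` reads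
`(a²)² = a (a² a) = a⁴`, and at `(x, y) = (a, a²)` it reads `a² a³ = a (a²)² = a a⁴ = 0`.
At `(x, y) = (a + a², a²)`, once all known products are substituted, it leaves `2 (a³)² = 0`.
-/

namespace IsBilin

variable {K V : Type*} [Field K] [AddCommGroup V] [Module K V] {φ : V → V → V}

theorem add_left (h : IsBilin K φ) (x y z : V) : φ (x + y) z = φ x z + φ y z := by
  simpa using h.1 1 x y z

theorem add_right (h : IsBilin K φ) (x y z : V) : φ x (y + z) = φ x y + φ x z := by
  simpa using h.2 1 x y z

end IsBilin

namespace JordanId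

variable {V : Type*} {φ : V → V → V} {a b c d : V}

theorem sq_mul_sq (hjord : JordanId φ) (hcomm : IsComm φ) (hb : φ a a = b) (hc : φ a b = c)
    (hd : φ a c = d) : φ b b = d := by
  simpa [hb, hcomm b a, hc, hd] using hjord a a

theorem sq_mul_cube_eq_zero [Zero V] (hjord : JordanId φ) (hcomm : IsComm φ) (hb : φ a a = b)
    (hc : φ a b = c) (hd : φ a c = d) (hcen : ∀ y, φ d y = 0) : φ b c = 0 := by
  simpa [hb, hc, hjord.sq_mul_sq hcomm hb hc hd, hcomm a d, hcen] using hjord a b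

theorem cube_mul_cube_eq_zero {K : Type*} [Field K] [NeZero (2 : K)] [AddCommGroup V]
    [Module K V] (hjord : JordanId φ) (hbil : IsBilin K φ) (hcomm : IsComm φ) (hb : φ a a = b)
    (hc : φ a b = c) (hd : φ a c = d) (hcen : ∀ y, φ d y = 0) : φ c c = 0 := by
  have hbb : φ b b = d := hjord.sq_mul_sq hcomm hb hc hd
  have hbc : φ b c = 0 := hjord.sq_mul_cube_eq_zero hcomm hb hc hd hcen
  have hba : φ b a = c := (hcomm b a).trans hc
  have hcb : φ c b = 0 := (hcomm c b).trans hbc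
  have hcen' (y : V) : φ y d = 0 := (hcomm y d).trans (hcen y)
  have key := hjord (a + b) b
  simp only [hbil.add_left, hbil.add_right, hb, hc, hba, hbb, hbc, hcb, hcen, hcen',
    add_zero, zero_add] at key
  rw [← two_smul K] at key
  exact (smul_eq_zero.mp key).resolve_left two_ne_zero

end JordanId

theorem dim_four_max_char_seq_structure_general
    {V : Type*} [AddCommGroup V] [Module ℂ V] (φ : V → V → V)
    (hbil : IsBilin ℂ φ) (hcomm : IsComm φ) (hjord : JordanId φ)
    (e : Module.Basis (Fin 4) ℂ V)
    (h11 : φ (e 0) (e 0) = e 1) (h12 : φ (e 0) (e 1) = e 2) (h13 : φ (e 0) (e 2) = e 3)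
    (hcen : ∀ y : V, φ (e 3) y = 0) :
    φ (e 1) (e 1) = e 3 ∧ φ (e 1) (e 2) = 0 ∧ φ (e 2) (e 2) = 0 :=
  ⟨hjord.sq_mul_sq hcomm h11 h12 h13, hjord.sq_mul_cube_eq_zero hcomm h11 h12 h13 hcen,
    hjord.cube_mul_cube_eq_zero hbil hcomm h11 h12 h13 hcen⟩

/-- in a 4-dimensional nilpotent complex Jordan algebra with
φ(e₁,e₁)=e₂, φ(e₁,e₂)=e₃, φ(e₁,e₃)=e₄ and e₄ central, one has
φ(e₂,e₂)=e₄, φ(e₂,e₃)=0 and φ(e₃,e₃)=0. -/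
theorem dim_four_max_char_seq_structure
    {V : Type*} [AddCommGroup V] [Module ℂ V] (φ : V → V → V)
    (hbil : IsBilin ℂ φ) (hcomm : IsComm φ) (hjord : JordanId φ)
    (hnilp : IsNilp ℂ φ) (e : Module.Basis (Fin 4) ℂ V)
    (h11 : φ (e 0) (e 0) = e 1) (h12 : φ (e 0) (e 1) = e 2) (h13 : φ (e 0) (e 2) = e 3)
    (hcen : ∀ y : V, φ (e 3) y = 0) :
    φ (e 1) (e 1) = e 3 ∧ φ (e 1) (e 2) = 0 ∧ φ (e 2) (e 2) = 0 :=
  dim_four_max_char_seq_structure_general φ hbil hcomm hjord e h11 h12 h13 hcen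
end
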